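/- Let V be a vertex superalgebra and x ∈ V₁ with x_{(0)}x = 0 and vac ∉ Im(x_{(0)}). Then Ker_V(x_{(0)})/Im_V(x_{(0)}), equipped with the induced vacuum vector, translation operator, and state-field map, is a vertex superalgebra. -/

import Mathlib

/-!
Since `x` is odd, the Borcherds identity with `m = 0` says that `x₍₀₎` is an odd derivation of
every product `a₍ₙ₎c`, and the translation axiom with `n = 0` says that it commutes with `T`.
Hence `Ker x₍₀₎` is a vertex subalgebra, and `Im x₍₀₎ ∩ Ker x₍₀₎` is a `T`-stable two-sided ideal
of it not containing the vacuum; both are graded because `x₍₀₎` reverses parity. The quotient of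
a vertex superalgebra by such an ideal inherits every axiom through the projection.
-/

/-- `(−1)^m` for `m : ℤ`. -/
noncomputable def zsgn (m : ℤ) : ℂ := if Even m then 1 else -1

/-- The sign `(−1)^{ij}` for parities `i, j ∈ ℤ/2`. -/
noncomputable def ssgn (i j : ZMod 2) : ℂ := if i = 1 ∧ j = 1 then -1 else 1

/-- The binomial coefficient `C(m, t)` for integer `m`. -/
noncomputable def zchoose (m : ℤ) (t : ℕ) : ℂ :=
  (∏ j ∈ Finset.range t, ((m : ℂ) - j)) / (t.factorial : ℂ)

/-- A vertex superalgebra over `ℂ`: a `ℤ/2`-graded space with vacuum, translation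
operator and modes `Y n a = a_{(n)}`, satisfying truncation, vacuum and translation
axioms and the Borcherds (locality) identity on homogeneous elements, where the sum
is truncated at any sufficiently large bound. -/
structure VertexSuperAlgebra (V : Type*) [AddCommGroup V] [Module ℂ V] where
  G : ZMod 2 → Submodule ℂ V
  compl : IsCompl (G 0) (G 1)
  vac : V
  vacNe : vac ≠ 0
  vacEven : vac ∈ G 0
  T : V →ₗ[ℂ] V
  Y : ℤ → V →ₗ[ℂ] V →ₗ[ℂ] V
  parity : ∀ (i j : ZMod 2) (n : ℤ), ∀ a ∈ G i, ∀ b ∈ G j, Y n a b ∈ G (i + j)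
  trunc : ∀ a b : V, ∃ N : ℤ, ∀ n ≥ N, Y n a b = 0
  vacLeft : ∀ (n : ℤ) (a : V), Y n vac a = if n = -1 then a else 0
  vacRight : ∀ (a : V) (n : ℤ), 0 ≤ n → Y n a vac = 0
  vacCreate : ∀ a : V, Y (-1) a vac = a
  Tvac : T vac = 0
  transl : ∀ (a b : V) (n : ℤ), T (Y n a b) - Y n a (T b) = (-n : ℂ) • Y (n - 1) a b
  borcherds : ∀ (i j : ZMod 2), ∀ a ∈ G i, ∀ b ∈ G j, ∀ (m n : ℤ) (c : V),
    ∃ K : ℕ, ∀ K' : ℕ, K ≤ K' →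
      Y n (Y m a b) c =
        ∑ t ∈ Finset.range K', ((-1 : ℂ) ^ t * zchoose m t) •
          (Y (m - t) a (Y (n + t) b c)
            - (zsgn m * ssgn i j) • Y (m + n - t) b (Y (t : ℤ) a c))

/-- The Duflo–Serganova space of a square-zero operator: `Ker / Im`. -/
abbrev DS {V : Type*} [AddCommGroup V] [Module ℂ V] (x : V →ₗ[ℂ] V) :=
  LinearMap.ker x ⧸ (LinearMap.range x).comap (LinearMap.ker x).subtype

lemma zchoose_zero_left {t : ℕ} (ht : t ≠ 0) : zchoose 0 t = 0 := by
  rw [zchoose, Finset.prod_eq_zero (Finset.mem_range.mpr (Nat.pos_of_ne_zero ht)) (by norm_num),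
    zero_div]

lemma ssgn_mul_self (i j : ZMod 2) : ssgn i j * ssgn i j = 1 := by
  unfold ssgn; split <;> norm_num

namespace VertexSuperAlgebra

variable {V : Type*} [AddCommGroup V] [Module ℂ V] (W : VertexSuperAlgebra V)

def IsHomogeneous (S : Submodule ℂ V) : Prop :=
  ∀ v ∈ S, ∃ v₀ ∈ S ⊓ W.G 0, ∃ v₁ ∈ S ⊓ W.G 1, v₀ + v₁ = v

lemma exists_add_eq (v : V) : ∃ v₀ ∈ W.G 0, ∃ v₁ ∈ W.G 1, v₀ + v₁ = v := by
  obtain ⟨v₀, v₁, h₀, h₁, h⟩ := Submodule.codisjoint_iff_exists_add_eq.mp W.compl.codisjoint v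
  exact ⟨v₀, h₀, v₁, h₁, h⟩

lemma eq_zero_of_mem_G_zero_of_mem_G_one {v : V} (h₀ : v ∈ W.G 0) (h₁ : v ∈ W.G 1) : v = 0 :=
  Submodule.disjoint_def.mp W.compl.disjoint v h₀ h₁

lemma eq_and_eq_of_add_eq_add {v₀ v₁ w₀ w₁ : V} (hv₀ : v₀ ∈ W.G 0) (hv₁ : v₁ ∈ W.G 1)
    (hw₀ : w₀ ∈ W.G 0) (hw₁ : w₁ ∈ W.G 1) (h : v₀ + v₁ = w₀ + w₁) : v₀ = w₀ ∧ v₁ = w₁ := by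
  have h' : v₀ - w₀ = w₁ - v₁ := by rw [sub_eq_sub_iff_add_eq_add, h, add_comm]
  have hz := W.eq_zero_of_mem_G_zero_of_mem_G_one (sub_mem hv₀ hw₀) (h' ▸ sub_mem hw₁ hv₁)
  exact ⟨sub_eq_zero.mp hz, (sub_eq_zero.mp (h' ▸ hz)).symm⟩

lemma isHomogeneous_top : W.IsHomogeneous ⊤ := fun v _ ↦ by
  simpa using W.exists_add_eq v

variable {W} in
lemma IsHomogeneous.inf {R S : Submodule ℂ V} (hR : W.IsHomogeneous R)
    (hS : W.IsHomogeneous S) : W.IsHomogeneous (R ⊓ S) := by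
  intro v hv
  obtain ⟨r₀, ⟨hr₀, hr₀G⟩, r₁, ⟨hr₁, hr₁G⟩, rfl⟩ := hR v hv.1
  obtain ⟨s₀, ⟨hs₀, hs₀G⟩, s₁, ⟨hs₁, hs₁G⟩, hs⟩ := hS _ hv.2
  obtain ⟨rfl, rfl⟩ := W.eq_and_eq_of_add_eq_add hs₀G hs₁G hr₀G hr₁G hs
  exact ⟨s₀, ⟨⟨hr₀, hs₀⟩, hs₀G⟩, s₁, ⟨⟨hr₁, hs₁⟩, hs₁G⟩, hs⟩

variable {W} in
lemma IsHomogeneous.induction {S : Submodule ℂ V} (hS : W.IsHomogeneous S) {P : V → Prop}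
    (add : ∀ u v, P u → P v → P (u + v)) (homogeneous : ∀ i, ∀ v ∈ S, v ∈ W.G i → P v)
    {v : V} (hv : v ∈ S) : P v := by
  obtain ⟨v₀, ⟨hv₀, hv₀G⟩, v₁, ⟨hv₁, hv₁G⟩, rfl⟩ := hS v hv
  exact add _ _ (homogeneous 0 v₀ hv₀ hv₀G) (homogeneous 1 v₁ hv₁ hv₁G)

section Subalgebra

variable (S : Submodule ℂ V) (hY : ∀ n, ∀ a ∈ S, ∀ b ∈ S, W.Y n a b ∈ S)

def restrictY (n : ℤ) : S →ₗ[ℂ] S →ₗ[ℂ] S :=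
  LinearMap.mk₂ ℂ (fun a b ↦ ⟨W.Y n a b, hY n a a.2 b b.2⟩)
    (fun _ _ _ ↦ Subtype.ext (by simp)) (fun _ _ _ ↦ Subtype.ext (by simp))
    (fun _ _ _ ↦ Subtype.ext (by simp)) (fun _ _ _ ↦ Subtype.ext (by simp))

@[simp]
lemma coe_restrictY (n : ℤ) (a b : S) : (W.restrictY S hY n a b : V) = W.Y n a b := rfl

def subalgebra (hS : W.IsHomogeneous S) (hvac : W.vac ∈ S) (hT : ∀ v ∈ S, W.T v ∈ S) :
    VertexSuperAlgebra S where
  G i := (W.G i).comap S.subtype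
  compl := by
    refine ⟨Submodule.disjoint_def.mpr fun v h₀ h₁ ↦ ?_,
      Submodule.codisjoint_iff_exists_add_eq.mpr fun v ↦ ?_⟩
    · exact Subtype.ext (W.eq_zero_of_mem_G_zero_of_mem_G_one h₀ h₁)
    · obtain ⟨v₀, ⟨hv₀, hv₀G⟩, v₁, ⟨hv₁, hv₁G⟩, hv⟩ := hS v v.2
      exact ⟨⟨v₀, hv₀⟩, ⟨v₁, hv₁⟩, hv₀G, hv₁G, Subtype.ext hv⟩
  vac := ⟨W.vac, hvac⟩
  vacNe h := W.vacNe congr(Subtype.val $h)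
  vacEven := W.vacEven
  T := W.T.restrict hT
  Y := W.restrictY S hY
  parity i j n a ha b hb := W.parity i j n a ha b hb
  trunc a b := by
    obtain ⟨N, hN⟩ := W.trunc a b
    exact ⟨N, fun n hn ↦ Subtype.ext (hN n hn)⟩
  vacLeft n a := by
    ext
    rw [coe_restrictY, W.vacLeft]
    split_ifs <;> rfl
  vacRight a n hn := Subtype.ext (W.vacRight a n hn)
  vacCreate a := Subtype.ext (W.vacCreate a)
  Tvac := Subtype.ext W.Tvac
  transl a b n := Subtype.ext (W.transl a b n)
  borcherds i j a ha b hb m n c := by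
    obtain ⟨K, hK⟩ := W.borcherds i j a ha b hb m n c
    exact ⟨K, fun K' hK' ↦ Subtype.ext (by simpa using hK K' hK')⟩

lemma isHomogeneous_comap_subtype {hS : W.IsHomogeneous S} {hvac : W.vac ∈ S}
    {hT : ∀ v ∈ S, W.T v ∈ S} {R : Submodule ℂ V} (hR : W.IsHomogeneous (R ⊓ S)) :
    (W.subalgebra S hY hS hvac hT).IsHomogeneous (R.comap S.subtype) := by
  intro v hv
  obtain ⟨v₀, ⟨⟨hv₀R, hv₀S⟩, hv₀G⟩, v₁, ⟨⟨hv₁R, hv₁S⟩, hv₁G⟩, h⟩ := hR v ⟨hv, v.2⟩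
  exact ⟨⟨v₀, hv₀S⟩, ⟨hv₀R, hv₀G⟩, ⟨v₁, hv₁S⟩, ⟨hv₁R, hv₁G⟩, Subtype.ext h⟩

end Subalgebra

section Quotient

variable (I : Submodule ℂ V) (hl : ∀ n, ∀ a ∈ I, ∀ b, W.Y n a b ∈ I)
  (hr : ∀ n a, ∀ b ∈ I, W.Y n a b ∈ I)

def quotientY (n : ℤ) : V ⧸ I →ₗ[ℂ] V ⧸ I →ₗ[ℂ] V ⧸ I :=
  ((W.Y n).compr₂ I.mkQ).liftQ₂ I I
    (fun a ha ↦ LinearMap.ext fun b ↦ (Submodule.Quotient.mk_eq_zero I).mpr (hl n a ha b))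
    (fun b hb ↦ LinearMap.ext fun a ↦ (Submodule.Quotient.mk_eq_zero I).mpr (hr n a b hb))

@[simp]
lemma quotientY_mk (n : ℤ) (a b : V) :
    W.quotientY I hl hr n (Submodule.Quotient.mk a) (Submodule.Quotient.mk b)
      = Submodule.Quotient.mk (W.Y n a b) := rfl

def quotient (hI : W.IsHomogeneous I) (hvac : W.vac ∉ I) (hT : ∀ v ∈ I, W.T v ∈ I) :
    VertexSuperAlgebra (V ⧸ I) where
  G i := (W.G i).map I.mkQ
  compl := by
    refine ⟨Submodule.disjoint_def.mpr fun q h₀ h₁ ↦ ?_,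
      Submodule.codisjoint_iff_exists_add_eq.mpr fun q ↦ ?_⟩
    · obtain ⟨v₀, hv₀, rfl⟩ := h₀
      obtain ⟨v₁, hv₁, hq⟩ := h₁
      obtain ⟨u₀, ⟨hu₀, hu₀G⟩, u₁, ⟨hu₁, hu₁G⟩, hu⟩ := hI _ ((Submodule.Quotient.eq I).mp hq)
      -- `v₁ - u₁ = v₀ + u₀` is both odd and even
      have h := W.eq_and_eq_of_add_eq_add (add_mem hv₀ hu₀G) (zero_mem _) (zero_mem _)
        (sub_mem hv₁ hu₁G)
        (by rw [add_zero, zero_add, eq_sub_iff_add_eq, add_assoc, hu, add_sub_cancel])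
      rw [add_eq_zero_iff_eq_neg] at h
      exact (Submodule.Quotient.mk_eq_zero I).mpr (h.1 ▸ neg_mem hu₀)
    · obtain ⟨v, rfl⟩ := Submodule.Quotient.mk_surjective I q
      obtain ⟨v₀, hv₀, v₁, hv₁, rfl⟩ := W.exists_add_eq v
      exact ⟨_, _, ⟨v₀, hv₀, rfl⟩, ⟨v₁, hv₁, rfl⟩, rfl⟩
  vac := Submodule.Quotient.mk W.vac
  vacNe h := hvac ((Submodule.Quotient.mk_eq_zero I).mp h)
  vacEven := ⟨W.vac, W.vacEven, rfl⟩
  T := I.mapQ I W.T hT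
  Y := W.quotientY I hl hr
  parity i j n := by
    rintro _ ⟨a, ha, rfl⟩ _ ⟨b, hb, rfl⟩
    exact ⟨_, W.parity i j n a ha b hb, rfl⟩
  trunc q r := by
    obtain ⟨a, rfl⟩ := Submodule.Quotient.mk_surjective I q
    obtain ⟨b, rfl⟩ := Submodule.Quotient.mk_surjective I r
    obtain ⟨N, hN⟩ := W.trunc a b
    exact ⟨N, fun n hn ↦ by rw [quotientY_mk, hN n hn, Submodule.Quotient.mk_zero]⟩
  vacLeft n q := by
    obtain ⟨a, rfl⟩ := Submodule.Quotient.mk_surjective I q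
    rw [quotientY_mk, W.vacLeft]
    split_ifs <;> simp
  vacRight q n hn := by
    obtain ⟨a, rfl⟩ := Submodule.Quotient.mk_surjective I q
    rw [quotientY_mk, W.vacRight a n hn, Submodule.Quotient.mk_zero]
  vacCreate q := by
    obtain ⟨a, rfl⟩ := Submodule.Quotient.mk_surjective I q
    rw [quotientY_mk, W.vacCreate]
  Tvac := by rw [Submodule.mapQ_apply, W.Tvac, Submodule.Quotient.mk_zero]
  transl q r n := by
    obtain ⟨a, rfl⟩ := Submodule.Quotient.mk_surjective I q
    obtain ⟨b, rfl⟩ := Submodule.Quotient.mk_surjective I r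
    simpa using congr(I.mkQ $(W.transl a b n))
  borcherds i j := by
    rintro _ ⟨a, ha, rfl⟩ _ ⟨b, hb, rfl⟩ m n r
    obtain ⟨c, rfl⟩ := Submodule.Quotient.mk_surjective I r
    obtain ⟨K, hK⟩ := W.borcherds i j a ha b hb m n c
    exact ⟨K, fun K' hK' ↦ by simpa using congr(I.mkQ $(hK K' hK'))⟩

end Quotient

section ZeroMode

variable {W} {x : V}

variable (W) in
lemma Y_zero_T (x b : V) : W.Y 0 x (W.T b) = W.T (W.Y 0 x b) := by
  have h := W.transl x b 0
  rw [Int.cast_zero, neg_zero, zero_smul, sub_eq_zero] at h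
  exact h.symm

lemma Y_zero_mem_G_one (hx : x ∈ W.G 1) {a : V} (ha : a ∈ W.G 0) : W.Y 0 x a ∈ W.G 1 :=
  W.parity 1 0 0 x hx a ha

lemma Y_zero_mem_G_zero (hx : x ∈ W.G 1) {a : V} (ha : a ∈ W.G 1) : W.Y 0 x a ∈ W.G 0 :=
  W.parity 1 1 0 x hx a ha

lemma Y_zero_Y (hx : x ∈ W.G 1) {j : ZMod 2} {a : V} (ha : a ∈ W.G j) (n : ℤ) (c : V) :
    W.Y 0 x (W.Y n a c) = W.Y n (W.Y 0 x a) c + ssgn 1 j • W.Y n a (W.Y 0 x c) := by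
  suffices h : W.Y n (W.Y 0 x a) c = W.Y 0 x (W.Y n a c) - ssgn 1 j • W.Y n a (W.Y 0 x c) by
    rw [h, sub_add_cancel]
  obtain ⟨K, hK⟩ := W.borcherds 1 j x hx a ha 0 n c
  rw [hK (K + 1) K.le_succ,
    Finset.sum_eq_single_of_mem 0 (Finset.mem_range.mpr K.succ_pos)
      fun t _ ht ↦ by rw [zchoose_zero_left ht, mul_zero, zero_smul]]
  simp [zchoose, zsgn]

lemma Y_zero_eq_zero_of_add_eq_zero (hx : x ∈ W.G 1) {v₀ v₁ : V} (hv₀ : v₀ ∈ W.G 0)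
    (hv₁ : v₁ ∈ W.G 1) (h : W.Y 0 x (v₀ + v₁) = 0) : W.Y 0 x v₀ = 0 ∧ W.Y 0 x v₁ = 0 := by
  obtain ⟨h₁, h₀⟩ := W.eq_and_eq_of_add_eq_add (Y_zero_mem_G_zero hx hv₁)
    (Y_zero_mem_G_one hx hv₀) (zero_mem _) (zero_mem _) (by rw [add_comm, ← map_add, h, add_zero])
  exact ⟨h₀, h₁⟩

lemma isHomogeneous_ker_Y_zero (hx : x ∈ W.G 1) :
    W.IsHomogeneous (LinearMap.ker (W.Y 0 x)) := by
  intro v hv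
  obtain ⟨v₀, hv₀, v₁, hv₁, rfl⟩ := W.exists_add_eq v
  obtain ⟨h₀, h₁⟩ := Y_zero_eq_zero_of_add_eq_zero hx hv₀ hv₁ hv
  exact ⟨v₀, ⟨h₀, hv₀⟩, v₁, ⟨h₁, hv₁⟩, rfl⟩

lemma isHomogeneous_range_Y_zero (hx : x ∈ W.G 1) :
    W.IsHomogeneous (LinearMap.range (W.Y 0 x)) := by
  rintro _ ⟨c, rfl⟩
  obtain ⟨c₀, hc₀, c₁, hc₁, rfl⟩ := W.exists_add_eq c
  exact ⟨W.Y 0 x c₁, ⟨⟨c₁, rfl⟩, Y_zero_mem_G_zero hx hc₁⟩,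
    W.Y 0 x c₀, ⟨⟨c₀, rfl⟩, Y_zero_mem_G_one hx hc₀⟩, by rw [map_add, add_comm]⟩

lemma Y_mem_ker_Y_zero (hx : x ∈ W.G 1) (n : ℤ) {a b : V} (ha : a ∈ LinearMap.ker (W.Y 0 x))
    (hb : b ∈ LinearMap.ker (W.Y 0 x)) : W.Y n a b ∈ LinearMap.ker (W.Y 0 x) := by
  refine (isHomogeneous_ker_Y_zero hx).induction (P := fun a ↦ W.Y n a b ∈ _)
    (fun u v hu hv ↦ by simpa using add_mem hu hv) (fun j a ha hj ↦ ?_) ha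
  rw [LinearMap.mem_ker] at ha hb ⊢
  rw [Y_zero_Y hx hj, ha, hb]
  simp

lemma Y_Y_zero_mem_range (hx : x ∈ W.G 1) (n : ℤ) {a : V} (ha : a ∈ LinearMap.ker (W.Y 0 x))
    (c : V) : W.Y n a (W.Y 0 x c) ∈ LinearMap.range (W.Y 0 x) := by
  refine (isHomogeneous_ker_Y_zero hx).induction
    (P := fun a ↦ W.Y n a (W.Y 0 x c) ∈ LinearMap.range (W.Y 0 x))
    (fun u v hu hv ↦ by simpa using add_mem hu hv)
    (fun j a ha hj ↦ ⟨ssgn 1 j • W.Y n a c, ?_⟩) ha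
  rw [map_smul, Y_zero_Y hx hj, LinearMap.mem_ker.mp ha]
  simp [smul_smul, ssgn_mul_self]

lemma Y_zero_Y_mem_range (hx : x ∈ W.G 1) (n : ℤ) (a : V) {c : V}
    (hc : c ∈ LinearMap.ker (W.Y 0 x)) : W.Y n (W.Y 0 x a) c ∈ LinearMap.range (W.Y 0 x) := by
  refine W.isHomogeneous_top.induction
    (P := fun a ↦ W.Y n (W.Y 0 x a) c ∈ LinearMap.range (W.Y 0 x))
    (fun u v hu hv ↦ by simpa using add_mem hu hv) (fun j a _ hj ↦ ⟨W.Y n a c, ?_⟩)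
    Submodule.mem_top
  rw [Y_zero_Y hx hj, LinearMap.mem_ker.mp hc]
  simp

def kerYZeroSubalgebra (hx : x ∈ W.G 1) : VertexSuperAlgebra (LinearMap.ker (W.Y 0 x)) :=
  W.subalgebra _ (fun n _ ha _ hb ↦ Y_mem_ker_Y_zero hx n ha hb) (isHomogeneous_ker_Y_zero hx)
    (W.vacRight x 0 le_rfl) fun v hv ↦ by rw [LinearMap.mem_ker, Y_zero_T, hv, map_zero]

def dsQuotient (hx : x ∈ W.G 1) (hvac : W.vac ∉ LinearMap.range (W.Y 0 x)) :
    VertexSuperAlgebra (DS (W.Y 0 x)) :=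
  (kerYZeroSubalgebra hx).quotient _
    (fun n a ⟨a', ha⟩ b ↦ by
      change W.Y n a b ∈ LinearMap.range (W.Y 0 x)
      rw [← show W.Y 0 x a' = a from ha]
      exact Y_zero_Y_mem_range hx n a' b.2)
    (fun n a b ⟨b', hb⟩ ↦ by
      change W.Y n a b ∈ LinearMap.range (W.Y 0 x)
      rw [← show W.Y 0 x b' = b from hb]
      exact Y_Y_zero_mem_range hx n a.2 b')
    (isHomogeneous_comap_subtype _ _ _
      ((isHomogeneous_range_Y_zero hx).inf (isHomogeneous_ker_Y_zero hx)))
    hvac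
    (fun v ⟨c, hc⟩ ↦ ⟨W.T c, by rw [Y_zero_T, hc]; rfl⟩)

end ZeroMode

end VertexSuperAlgebra

theorem stmt8_general {V : Type*} [AddCommGroup V] [Module ℂ V]
    (W : VertexSuperAlgebra V) (x : V) (hx : x ∈ W.G 1)
    (hvac : W.vac ∉ LinearMap.range (W.Y 0 x)) :
    ∃ Wq : VertexSuperAlgebra (DS (W.Y 0 x)),
      (∀ hv : W.vac ∈ LinearMap.ker (W.Y 0 x),
        Wq.vac = (Submodule.Quotient.mk ⟨W.vac, hv⟩ : DS (W.Y 0 x))) ∧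
      (∀ (a : V) (ha : a ∈ LinearMap.ker (W.Y 0 x))
          (haT : W.T a ∈ LinearMap.ker (W.Y 0 x)),
        Wq.T (Submodule.Quotient.mk ⟨a, ha⟩)
          = (Submodule.Quotient.mk ⟨W.T a, haT⟩ : DS (W.Y 0 x))) ∧
      (∀ (n : ℤ) (a b : V) (ha : a ∈ LinearMap.ker (W.Y 0 x))
          (hb : b ∈ LinearMap.ker (W.Y 0 x))
          (hab : W.Y n a b ∈ LinearMap.ker (W.Y 0 x)),
        Wq.Y n (Submodule.Quotient.mk ⟨a, ha⟩) (Submodule.Quotient.mk ⟨b, hb⟩)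
          = (Submodule.Quotient.mk ⟨W.Y n a b, hab⟩ : DS (W.Y 0 x))) :=
  ⟨VertexSuperAlgebra.dsQuotient hx hvac, fun _ ↦ rfl, fun _ _ _ ↦ rfl, fun _ _ _ _ _ _ ↦ rfl⟩

/-- for a vertex superalgebra `V` and odd `x` with `x_{(0)}x = 0` and
`vac ∉ Im x_{(0)}`, the quotient `Ker x_{(0)} / Im x_{(0)}` carries a vertex
superalgebra structure whose vacuum, translation operator and modes are induced
from those of `V`. -/
theorem stmt8 {V : Type*} [AddCommGroup V] [Module ℂ V]
    (W : VertexSuperAlgebra V) (x : V) (hx : x ∈ W.G 1)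
    (hxx : W.Y 0 x x = 0) (hvac : W.vac ∉ LinearMap.range (W.Y 0 x)) :
    ∃ Wq : VertexSuperAlgebra (DS (W.Y 0 x)),
      (∀ hv : W.vac ∈ LinearMap.ker (W.Y 0 x),
        Wq.vac = (Submodule.Quotient.mk ⟨W.vac, hv⟩ : DS (W.Y 0 x))) ∧
      (∀ (a : V) (ha : a ∈ LinearMap.ker (W.Y 0 x))
          (haT : W.T a ∈ LinearMap.ker (W.Y 0 x)),
        Wq.T (Submodule.Quotient.mk ⟨a, ha⟩)
          = (Submodule.Quotient.mk ⟨W.T a, haT⟩ : DS (W.Y 0 x))) ∧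
      (∀ (n : ℤ) (a b : V) (ha : a ∈ LinearMap.ker (W.Y 0 x))
          (hb : b ∈ LinearMap.ker (W.Y 0 x))
          (hab : W.Y n a b ∈ LinearMap.ker (W.Y 0 x)),
        Wq.Y n (Submodule.Quotient.mk ⟨a, ha⟩) (Submodule.Quotient.mk ⟨b, hb⟩)
          = (Submodule.Quotient.mk ⟨W.Y n a b, hab⟩ : DS (W.Y 0 x))) :=
  stmt8_general W x hx hvac
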